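/- arXiv:1209.3834 — 3 statements merged into one kernel-verified Lean document; each statement's English description precedes it below -/
import Mathlib

section
/- With X = UΣV^T rank k and ξ = UMV^T + U_pV^T + UV_p^T a tangent vector, define Z_U = U(Σ + M/2 - MΣ^{-1}M/8) + U_p(I - Σ^{-1}M/2) and Z_V = V(I + M^TΣ^{-T}/2 - M^TΣ^{-T}M^TΣ^{-T}/8) + V_p(Σ^{-T} - Σ^{-T}M^TΣ^{-T}/2). Then Z_U Z_V^T = W X^† W, where W = X + P^s_X(ξ)/2 + P^p_X(ξ) - P^s_X(ξ)X^†P^s_X(ξ)/8 - P^p_X(ξ)X^†P^s_X(ξ)/2 - P^s_X(ξ)X^†P^p_X(ξ)/2. -/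
open Matrix

set_option maxHeartbeats 4000000

/-- The factored form Z_U Z_Vᵀ of the second-order retraction equals W X† W. -/
theorem second_order_retraction_WXW_form (m n k : ℕ)
    (U Up : Matrix (Fin m) (Fin k) ℝ) (V Vp : Matrix (Fin n) (Fin k) ℝ)
    (S M Sinv : Matrix (Fin k) (Fin k) ℝ)
    (hU : Uᵀ * U = 1) (hV : Vᵀ * V = 1)
    (hS1 : S * Sinv = 1) (hS2 : Sinv * S = 1)
    (hUp : Upᵀ * U = 0) (hVp : Vpᵀ * V = 0)
    (X ξ : Matrix (Fin m) (Fin n) ℝ)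
    (hX : X = U * S * Vᵀ) (hξ : ξ = U * M * Vᵀ + Up * Vᵀ + U * Vpᵀ) :
    let Xd : Matrix (Fin n) (Fin m) ℝ := V * Sinv * Uᵀ
    let Ps : Matrix (Fin m) (Fin n) ℝ := U * Uᵀ * ξ * (V * Vᵀ)
    let Pp : Matrix (Fin m) (Fin n) ℝ :=
      (1 - U * Uᵀ) * ξ * (V * Vᵀ) + U * Uᵀ * ξ * (1 - V * Vᵀ)
    let W : Matrix (Fin m) (Fin n) ℝ :=
      X + (1 / 2 : ℝ) • Ps + Pp - (1 / 8 : ℝ) • (Ps * Xd * Ps)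
        - (1 / 2 : ℝ) • (Pp * Xd * Ps) - (1 / 2 : ℝ) • (Ps * Xd * Pp)
    let ZU : Matrix (Fin m) (Fin k) ℝ :=
      U * (S + (1 / 2 : ℝ) • M - (1 / 8 : ℝ) • (M * Sinv * M))
        + Up * (1 - (1 / 2 : ℝ) • (Sinv * M))
    let ZV : Matrix (Fin n) (Fin k) ℝ :=
      V * (1 + (1 / 2 : ℝ) • (Mᵀ * Sinvᵀ) - (1 / 8 : ℝ) • (Mᵀ * Sinvᵀ * Mᵀ * Sinvᵀ))
        + Vp * (Sinvᵀ - (1 / 2 : ℝ) • (Sinvᵀ * Mᵀ * Sinvᵀ))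
    ZU * ZVᵀ = W * Xd * W := by
  intro Xd Ps Pp W ZU ZV
  have hUUp : Uᵀ * Up = 0 := by
    have := congrArg Matrix.transpose hUp
    simpa using this
  have hVVp : Vᵀ * Vp = 0 := by
    have := congrArg Matrix.transpose hVp
    simpa using this
  have hU' : ∀ (p : ℕ) (A : Matrix (Fin k) (Fin p) ℝ), Uᵀ * (U * A) = A := by
    intro p A; rw [← Matrix.mul_assoc, hU, Matrix.one_mul]
  have hV' : ∀ (p : ℕ) (A : Matrix (Fin k) (Fin p) ℝ), Vᵀ * (V * A) = A := by
    intro p A; rw [← Matrix.mul_assoc, hV, Matrix.one_mul]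
  have hUUp' : ∀ (p : ℕ) (A : Matrix (Fin k) (Fin p) ℝ), Uᵀ * (Up * A) = 0 := by
    intro p A; rw [← Matrix.mul_assoc, hUUp, Matrix.zero_mul]
  have hVVp' : ∀ (p : ℕ) (A : Matrix (Fin k) (Fin p) ℝ), Vᵀ * (Vp * A) = 0 := by
    intro p A; rw [← Matrix.mul_assoc, hVVp, Matrix.zero_mul]
  have hUpU' : ∀ (p : ℕ) (A : Matrix (Fin k) (Fin p) ℝ), Upᵀ * (U * A) = 0 := by
    intro p A; rw [← Matrix.mul_assoc, hUp, Matrix.zero_mul]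
  have hVpV' : ∀ (p : ℕ) (A : Matrix (Fin k) (Fin p) ℝ), Vpᵀ * (V * A) = 0 := by
    intro p A; rw [← Matrix.mul_assoc, hVp, Matrix.zero_mul]
  have hS1' : ∀ (p : ℕ) (A : Matrix (Fin k) (Fin p) ℝ), S * (Sinv * A) = A := by
    intro p A; rw [← Matrix.mul_assoc, hS1, Matrix.one_mul]
  have hS2' : ∀ (p : ℕ) (A : Matrix (Fin k) (Fin p) ℝ), Sinv * (S * A) = A := by
    intro p A; rw [← Matrix.mul_assoc, hS2, Matrix.one_mul]
  show ZU * ZVᵀ = W * Xd * W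
  simp only [ZU, ZV, W, Ps, Pp, Xd, hX, hξ]
  simp only [Matrix.transpose_add, Matrix.transpose_mul, Matrix.transpose_smul,
    Matrix.transpose_sub, Matrix.transpose_one, Matrix.transpose_transpose,
    Matrix.mul_add, Matrix.add_mul, Matrix.mul_sub, Matrix.sub_mul,
    Matrix.smul_mul, Matrix.mul_smul, Matrix.mul_assoc, Matrix.mul_one,
    Matrix.one_mul, smul_add, smul_sub, smul_smul,
    hU', hV', hUUp', hVVp', hUpU', hVpV', hS1', hS2', hU, hV, hUp, hVp, hUUp, hVVp,
    hS1, hS2, Matrix.mul_zero, Matrix.zero_mul, smul_zero, Matrix.mul_one,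
    add_zero, zero_add, sub_zero, zero_sub]
  module
end

section
/- With the second-order retraction R_X^{(2)}(ξ) = Z_U Z_V^T as defined via Z_U, Z_V above, one has R_X^{(2)}(ξ) = X + ξ + U_pΣ^{-1}V_p^T + O(‖ξ‖³) as ‖ξ‖ → 0; in particular the residual R_X^{(2)}(ξ) - X - ξ - U_pΣ^{-1}V_p^T has norm bounded by C‖ξ‖³ for ξ in a neighborhood of 0 in the tangent space. -/
/-!
Writing `T = Σ⁻¹`, the product `Z_U Z_Vᵀ` is a polynomial in `M`, `U_p`, `V_p` whose terms of
order at most two are exactly `X + ξ + U_p T V_pᵀ`. What is left is a sum of products containing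
at least three of `M`, `U_p`, `V_p`. For the Frobenius norm, multiplication by `U` on the left or
by `Vᵀ` on the right is an isometry, and the three components of `ξ` are mutually orthogonal, so
`‖ξ‖² = ‖M‖² + ‖U_p‖² + ‖V_p‖²`. Hence each component is bounded by `‖ξ‖`, and
submultiplicativity bounds the remainder by `C ‖ξ‖³` for `‖ξ‖ < 1`.
-/

open Matrix

/-- Frobenius norm via the trace inner product. -/
noncomputable def fnorm {m n : ℕ} (A : Matrix (Fin m) (Fin n) ℝ) : ℝ :=
  Real.sqrt (trace (Aᵀ * A))

attribute [local instance] Matrix.frobeniusSeminormedAddCommGroup Matrix.frobeniusNormedSpace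

section Frobenius

variable {m n k : Type*} [Fintype m] [Fintype n] [Fintype k]

theorem trace_transpose_mul_self_eq_norm_sq (A : Matrix m n ℝ) : trace (Aᵀ * A) = ‖A‖ ^ 2 := by
  rw [frobenius_norm_def, ← Real.rpow_natCast, ← Real.rpow_mul (by positivity),
    Nat.cast_ofNat, one_div_mul_cancel two_ne_zero, Real.rpow_one]
  simp only [trace, diag, mul_apply, transpose_apply, Real.norm_eq_abs, Real.rpow_two, sq_abs,
    ← sq]
  exact Finset.sum_comm

theorem fnorm_eq_norm {m n : ℕ} (A : Matrix (Fin m) (Fin n) ℝ) : fnorm A = ‖A‖ := by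
  rw [fnorm, trace_transpose_mul_self_eq_norm_sq, Real.sqrt_sq (norm_nonneg A)]

theorem norm_add_sq_of_trace_transpose_mul_eq_zero {A B : Matrix m n ℝ}
    (h : trace (Aᵀ * B) = 0) : ‖A + B‖ ^ 2 = ‖A‖ ^ 2 + ‖B‖ ^ 2 := by
  have h' : trace (Bᵀ * A) = 0 := by
    rw [← trace_transpose, transpose_mul, transpose_transpose, h]
  simp only [← trace_transpose_mul_self_eq_norm_sq, transpose_add, Matrix.add_mul,
    Matrix.mul_add, trace_add, h, h']
  ring

theorem frobenius_norm_mul_le_of_le {l : Type*} [Fintype l] {A : Matrix l m ℝ}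
    {B : Matrix m n ℝ} {a b : ℝ} (hA : ‖A‖ ≤ a) (hB : ‖B‖ ≤ b) : ‖A * B‖ ≤ a * b :=
  (frobenius_norm_mul A B).trans (mul_le_mul hA hB (norm_nonneg B) ((norm_nonneg A).trans hA))

theorem norm_smul_add_smul_le_two_mul {A B : Matrix m n ℝ} {a b t : ℝ} (ha : |a| ≤ 1)
    (hb : |b| ≤ 1) (hA : ‖A‖ ≤ t) (hB : ‖B‖ ≤ t) : ‖a • A + b • B‖ ≤ 2 * t := by
  have hA' : ‖a • A‖ ≤ t := by
    rw [norm_smul, Real.norm_eq_abs]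
    exact (mul_le_of_le_one_left (norm_nonneg A) ha).trans hA
  have hB' : ‖b • B‖ ≤ t := by
    rw [norm_smul, Real.norm_eq_abs]
    exact (mul_le_of_le_one_left (norm_nonneg B) hb).trans hB
  linarith [norm_add_le (a • A) (b • B)]

variable [DecidableEq k]

theorem norm_mul_of_transpose_mul_self_eq_one {U : Matrix m k ℝ} (hU : Uᵀ * U = 1)
    (A : Matrix k n ℝ) : ‖U * A‖ = ‖A‖ := by
  rw [← sq_eq_sq₀ (norm_nonneg _) (norm_nonneg _), ← trace_transpose_mul_self_eq_norm_sq,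
    ← trace_transpose_mul_self_eq_norm_sq, transpose_mul, Matrix.mul_assoc,
    ← Matrix.mul_assoc Uᵀ, hU, Matrix.one_mul]

theorem norm_mul_transpose_of_transpose_mul_self_eq_one {V : Matrix n k ℝ}
    (hV : Vᵀ * V = 1) (A : Matrix m k ℝ) : ‖A * Vᵀ‖ = ‖A‖ := by
  rw [← frobenius_norm_transpose, transpose_mul, transpose_transpose,
    norm_mul_of_transpose_mul_self_eq_one hV, frobenius_norm_transpose]

end Frobenius

section TangentVector

variable {m n k : Type*} [Fintype m] [Fintype n] [Fintype k] [DecidableEq k]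
  {U Up : Matrix m k ℝ} {V Vp : Matrix n k ℝ} {M : Matrix k k ℝ}

theorem norm_tangent_sq (hU : Uᵀ * U = 1) (hV : Vᵀ * V = 1) (hUp : Upᵀ * U = 0)
    (hVp : Vpᵀ * V = 0) :
    ‖U * M * Vᵀ + Up * Vᵀ + U * Vpᵀ‖ ^ 2 = ‖M‖ ^ 2 + ‖Up‖ ^ 2 + ‖Vp‖ ^ 2 := by
  have hsplit : U * M * Vᵀ + Up * Vᵀ + U * Vpᵀ = U * (M * Vᵀ + Vpᵀ) + Up * Vᵀ := by
    rw [Matrix.mul_add, Matrix.mul_assoc]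
    abel
  have hUUp : Uᵀ * Up = 0 := by rw [← transpose_transpose Up, ← transpose_mul, hUp, transpose_zero]
  have horthU : trace ((U * (M * Vᵀ + Vpᵀ))ᵀ * (Up * Vᵀ)) = 0 := by
    rw [transpose_mul, Matrix.mul_assoc, ← Matrix.mul_assoc Uᵀ, hUUp, Matrix.zero_mul,
      Matrix.mul_zero, trace_zero]
  have horthV : trace ((M * Vᵀ)ᵀ * Vpᵀ) = 0 := by
    rw [transpose_mul, transpose_transpose, Matrix.mul_assoc, trace_mul_comm, Matrix.mul_assoc,
      hVp, Matrix.mul_zero, trace_zero]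
  rw [hsplit, norm_add_sq_of_trace_transpose_mul_eq_zero horthU,
    norm_mul_of_transpose_mul_self_eq_one hU, norm_add_sq_of_trace_transpose_mul_eq_zero horthV,
    norm_mul_transpose_of_transpose_mul_self_eq_one hV,
    norm_mul_transpose_of_transpose_mul_self_eq_one hV, frobenius_norm_transpose]
  ring

theorem norm_tangent_components_le (hU : Uᵀ * U = 1) (hV : Vᵀ * V = 1) (hUp : Upᵀ * U = 0)
    (hVp : Vpᵀ * V = 0) :
    ‖M‖ ≤ ‖U * M * Vᵀ + Up * Vᵀ + U * Vpᵀ‖ ∧ ‖Up‖ ≤ ‖U * M * Vᵀ + Up * Vᵀ + U * Vpᵀ‖ ∧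
      ‖Vp‖ ≤ ‖U * M * Vᵀ + Up * Vᵀ + U * Vpᵀ‖ := by
  have h := norm_tangent_sq (M := M) hU hV hUp hVp
  refine ⟨?_, ?_, ?_⟩ <;> refine (sq_le_sq₀ (norm_nonneg _) (norm_nonneg _)).1 ?_ <;>
    nlinarith [sq_nonneg ‖M‖, sq_nonneg ‖Up‖, sq_nonneg ‖Vp‖]

end TangentVector

section Retraction

variable {m n k : Type*} [Fintype k] [DecidableEq k]

/-- `(U M/8 + U_p/2) T M` and `T M T (M Vᵀ/8 + V_pᵀ/2)` are the second-order terms subtracted in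
`Z_U` and `Z_Vᵀ`. -/
noncomputable def retractionRemainder (U Up : Matrix m k ℝ) (V Vp : Matrix n k ℝ) (T M : Matrix k k ℝ) :
    Matrix m n ℝ :=
  ((1 / 8 : ℝ) • (U * M) + (1 / 2 : ℝ) • Up) * T * M * T * M * T *
        ((1 / 8 : ℝ) • (M * Vᵀ) + (1 / 2 : ℝ) • Vpᵀ)
    - ((1 / 2 : ℝ) • (U * M) + Up) * T * M * T * ((1 / 8 : ℝ) • (M * Vᵀ) + (1 / 2 : ℝ) • Vpᵀ)
    - ((1 / 8 : ℝ) • (U * M) + (1 / 2 : ℝ) • Up) * T * M * T * ((1 / 2 : ℝ) • (M * Vᵀ) + Vpᵀ)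

theorem retraction_residual_eq_remainder (U Up : Matrix m k ℝ) (V Vp : Matrix n k ℝ)
    (S T M : Matrix k k ℝ) (hS : S * T = 1) :
    (U * (S + (1 / 2 : ℝ) • M - (1 / 8 : ℝ) • (M * T * M)) + Up * (1 - (1 / 2 : ℝ) • (T * M))) *
        (V * (1 + (1 / 2 : ℝ) • (Mᵀ * Tᵀ) - (1 / 8 : ℝ) • (Mᵀ * Tᵀ * Mᵀ * Tᵀ))
          + Vp * (Tᵀ - (1 / 2 : ℝ) • (Tᵀ * Mᵀ * Tᵀ)))ᵀ
      - (U * S * Vᵀ + (U * M * Vᵀ + Up * Vᵀ + U * Vpᵀ) + Up * T * Vpᵀ)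
    = retractionRemainder U Up V Vp T M := by
  have hS' (B : Matrix k n ℝ) : S * (T * B) = B := by
    rw [← Matrix.mul_assoc, hS, Matrix.one_mul]
  simp only [transpose_add, transpose_sub, transpose_mul, transpose_smul, transpose_transpose,
    Matrix.mul_add, Matrix.add_mul, Matrix.mul_sub, Matrix.sub_mul, Matrix.mul_one,
    Matrix.smul_mul, Matrix.mul_smul, smul_smul, smul_add, smul_sub, Matrix.mul_assoc, hS',
    retractionRemainder]
  module

variable [Fintype m] [Fintype n]

theorem norm_retraction_remainder_le {U Up : Matrix m k ℝ} {V Vp : Matrix n k ℝ}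
    {T M : Matrix k k ℝ} {t : ℝ} (hU : Uᵀ * U = 1) (hV : Vᵀ * V = 1) (hM : ‖M‖ ≤ t)
    (hUp : ‖Up‖ ≤ t) (hVp : ‖Vp‖ ≤ t) :
    ‖retractionRemainder U Up V Vp T M‖
      ≤ 4 * ‖T‖ ^ 2 * (‖T‖ * t + 2) * t ^ 3 := by
  rw [retractionRemainder]
  have hUM : ‖U * M‖ ≤ t := by rwa [norm_mul_of_transpose_mul_self_eq_one hU]
  have hMV : ‖M * Vᵀ‖ ≤ t := by rwa [norm_mul_transpose_of_transpose_mul_self_eq_one hV]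
  have hVpT : ‖Vpᵀ‖ ≤ t := by rwa [frobenius_norm_transpose]
  have hP : ‖(1 / 8 : ℝ) • (U * M) + (1 / 2 : ℝ) • Up‖ ≤ 2 * t :=
    norm_smul_add_smul_le_two_mul (by norm_num) (by norm_num) hUM hUp
  have hP' : ‖(1 / 2 : ℝ) • (U * M) + Up‖ ≤ 2 * t := by
    simpa using norm_smul_add_smul_le_two_mul (b := 1) (by norm_num) (by norm_num) hUM hUp
  have hQ : ‖(1 / 8 : ℝ) • (M * Vᵀ) + (1 / 2 : ℝ) • Vpᵀ‖ ≤ 2 * t :=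
    norm_smul_add_smul_le_two_mul (by norm_num) (by norm_num) hMV hVpT
  have hQ' : ‖(1 / 2 : ℝ) • (M * Vᵀ) + Vpᵀ‖ ≤ 2 * t := by
    simpa using norm_smul_add_smul_le_two_mul (b := 1) (by norm_num) (by norm_num) hMV hVpT
  have hT : ‖T‖ ≤ ‖T‖ := le_rfl
  calc _ ≤ _ + _ + _ := (norm_sub_le _ _).trans (add_le_add_left (norm_sub_le _ _) _)
    _ ≤ 2 * t * ‖T‖ * t * ‖T‖ * t * ‖T‖ * (2 * t) + 2 * t * ‖T‖ * t * ‖T‖ * (2 * t)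
        + 2 * t * ‖T‖ * t * ‖T‖ * (2 * t) := by
      gcongr
      · exact frobenius_norm_mul_le_of_le (frobenius_norm_mul_le_of_le (frobenius_norm_mul_le_of_le
          (frobenius_norm_mul_le_of_le (frobenius_norm_mul_le_of_le
            (frobenius_norm_mul_le_of_le hP hT) hM) hT) hM) hT) hQ
      · exact frobenius_norm_mul_le_of_le (frobenius_norm_mul_le_of_le (frobenius_norm_mul_le_of_le
          (frobenius_norm_mul_le_of_le hP' hT) hM) hT) hQ
      · exact frobenius_norm_mul_le_of_le (frobenius_norm_mul_le_of_le (frobenius_norm_mul_le_of_le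
          (frobenius_norm_mul_le_of_le hP hT) hM) hT) hQ'
    _ = 4 * ‖T‖ ^ 2 * (‖T‖ * t + 2) * t ^ 3 := by ring

end Retraction

theorem second_order_retraction_taylor_general (m n k : ℕ)
    (U : Matrix (Fin m) (Fin k) ℝ) (V : Matrix (Fin n) (Fin k) ℝ)
    (S Sinv : Matrix (Fin k) (Fin k) ℝ)
    (hU : Uᵀ * U = 1) (hV : Vᵀ * V = 1)
    (hS1 : S * Sinv = 1)
    (X : Matrix (Fin m) (Fin n) ℝ) (hX : X = U * S * Vᵀ) :
    ∃ C > (0 : ℝ), ∃ δ > (0 : ℝ),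
      ∀ (M : Matrix (Fin k) (Fin k) ℝ) (Up : Matrix (Fin m) (Fin k) ℝ)
        (Vp : Matrix (Fin n) (Fin k) ℝ),
        Upᵀ * U = 0 → Vpᵀ * V = 0 →
        ∀ ξ : Matrix (Fin m) (Fin n) ℝ, ξ = U * M * Vᵀ + Up * Vᵀ + U * Vpᵀ →
        fnorm ξ < δ →
        fnorm ((U * (S + (1 / 2 : ℝ) • M - (1 / 8 : ℝ) • (M * Sinv * M))
              + Up * (1 - (1 / 2 : ℝ) • (Sinv * M))) *
            (V * (1 + (1 / 2 : ℝ) • (Mᵀ * Sinvᵀ)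
                - (1 / 8 : ℝ) • (Mᵀ * Sinvᵀ * Mᵀ * Sinvᵀ))
              + Vp * (Sinvᵀ - (1 / 2 : ℝ) • (Sinvᵀ * Mᵀ * Sinvᵀ)))ᵀ
            - (X + ξ + Up * Sinv * Vpᵀ))
          ≤ C * (fnorm ξ) ^ 3 := by
  refine ⟨4 * ‖Sinv‖ ^ 2 * (‖Sinv‖ + 2) + 1, by positivity, 1, one_pos, ?_⟩
  intro M Up Vp hUp hVp ξ hξ hξ_lt
  obtain ⟨hM, hUp_le, hVp_le⟩ := norm_tangent_components_le (M := M) hU hV hUp hVp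
  subst hX hξ
  rw [fnorm_eq_norm] at hξ_lt
  rw [fnorm_eq_norm, fnorm_eq_norm, retraction_residual_eq_remainder U Up V Vp S Sinv M hS1]
  set t := ‖U * M * Vᵀ + Up * Vᵀ + U * Vpᵀ‖
  calc _ ≤ 4 * ‖Sinv‖ ^ 2 * (‖Sinv‖ * t + 2) * t ^ 3 :=
        norm_retraction_remainder_le hU hV hM hUp_le hVp_le
    _ ≤ 4 * ‖Sinv‖ ^ 2 * (‖Sinv‖ + 2) * t ^ 3 := by
      gcongr
      exact mul_le_of_le_one_right (norm_nonneg _) hξ_lt.le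
    _ ≤ (4 * ‖Sinv‖ ^ 2 * (‖Sinv‖ + 2) + 1) * t ^ 3 := by
      gcongr
      exact le_add_of_nonneg_right zero_le_one

/-- Second-order expansion of the retraction:
R_X^{(2)}(ξ) = X + ξ + U_pΣ⁻¹V_pᵀ + O(‖ξ‖³) as ‖ξ‖ → 0. -/
theorem second_order_retraction_taylor (m n k : ℕ)
    (U : Matrix (Fin m) (Fin k) ℝ) (V : Matrix (Fin n) (Fin k) ℝ)
    (S Sinv : Matrix (Fin k) (Fin k) ℝ)
    (hU : Uᵀ * U = 1) (hV : Vᵀ * V = 1)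
    (hS1 : S * Sinv = 1) (hS2 : Sinv * S = 1)
    (X : Matrix (Fin m) (Fin n) ℝ) (hX : X = U * S * Vᵀ) :
    ∃ C > (0 : ℝ), ∃ δ > (0 : ℝ),
      ∀ (M : Matrix (Fin k) (Fin k) ℝ) (Up : Matrix (Fin m) (Fin k) ℝ)
        (Vp : Matrix (Fin n) (Fin k) ℝ),
        Upᵀ * U = 0 → Vpᵀ * V = 0 →
        ∀ ξ : Matrix (Fin m) (Fin n) ℝ, ξ = U * M * Vᵀ + Up * Vᵀ + U * Vpᵀ →
        fnorm ξ < δ →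
        fnorm ((U * (S + (1 / 2 : ℝ) • M - (1 / 8 : ℝ) • (M * Sinv * M))
              + Up * (1 - (1 / 2 : ℝ) • (Sinv * M))) *
            (V * (1 + (1 / 2 : ℝ) • (Mᵀ * Sinvᵀ)
                - (1 / 8 : ℝ) • (Mᵀ * Sinvᵀ * Mᵀ * Sinvᵀ))
              + Vp * (Sinvᵀ - (1 / 2 : ℝ) • (Sinvᵀ * Mᵀ * Sinvᵀ)))ᵀ
            - (X + ξ + Up * Sinv * Vpᵀ))
          ≤ C * (fnorm ξ) ^ 3 :=
  second_order_retraction_taylor_general m n k U V S Sinv hU hV hS1 X hX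
end

section
/- Let O(k) × O(k) act on factorizations as follows: if Ũ = UQ_U, Ṽ = VQ_V, Σ̃ = Q_U^TΣQ_V for orthogonal Q_U, Q_V ∈ O(k), and correspondingly M̃ = Q_U^TMQ_V, Ũ_p = U_pQ_V, Ṽ_p = V_pQ_U, then the matrices Z_Ũ Z_Ṽ^T and Z_U Z_V^T defining the second-order retraction coincide; i.e., R_X^{(2)}(ξ) is independent of the chosen factorization of X and representation of ξ. -/
open Matrix

/-- The second-order retraction is independent of the chosen factorization of X and
representation of ξ: under Ũ = UQ_U, Ṽ = VQ_V, Σ̃ = Q_UᵀΣQ_V (with Q_U, Q_V orthogonal)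
and M̃ = Q_UᵀMQ_V, Ũ_p = U_pQ_V, Ṽ_p = V_pQ_U, the products Z_Ũ Z_Ṽᵀ and Z_U Z_Vᵀ
coincide. -/
theorem retraction_independent_of_factorization (m n k : ℕ)
    (U Up : Matrix (Fin m) (Fin k) ℝ) (V Vp : Matrix (Fin n) (Fin k) ℝ)
    (S M Sinv : Matrix (Fin k) (Fin k) ℝ)
    (QU QV : Matrix (Fin k) (Fin k) ℝ)
    (hU : Uᵀ * U = 1) (hV : Vᵀ * V = 1)
    (hS1 : S * Sinv = 1) (hS2 : Sinv * S = 1)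
    (hQU : QUᵀ * QU = 1) (hQU' : QU * QUᵀ = 1)
    (hQV : QVᵀ * QV = 1) (hQV' : QV * QVᵀ = 1)
    (hUp : Upᵀ * U = 0) (hVp : Vpᵀ * V = 0) :
    let Ut := U * QU
    let Vt := V * QV
    let St := QUᵀ * S * QV
    let Stinv := QVᵀ * Sinv * QU
    let Mt := QUᵀ * M * QV
    let Upt := Up * QV
    let Vpt := Vp * QU
    let ZU := U * (S + (1 / 2 : ℝ) • M - (1 / 8 : ℝ) • (M * Sinv * M))
        + Up * (1 - (1 / 2 : ℝ) • (Sinv * M))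
    let ZV := V * (1 + (1 / 2 : ℝ) • (Mᵀ * Sinvᵀ)
          - (1 / 8 : ℝ) • (Mᵀ * Sinvᵀ * Mᵀ * Sinvᵀ))
        + Vp * (Sinvᵀ - (1 / 2 : ℝ) • (Sinvᵀ * Mᵀ * Sinvᵀ))
    let ZUt := Ut * (St + (1 / 2 : ℝ) • Mt - (1 / 8 : ℝ) • (Mt * Stinv * Mt))
        + Upt * (1 - (1 / 2 : ℝ) • (Stinv * Mt))
    let ZVt := Vt * (1 + (1 / 2 : ℝ) • (Mtᵀ * Stinvᵀ)
          - (1 / 8 : ℝ) • (Mtᵀ * Stinvᵀ * Mtᵀ * Stinvᵀ))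
        + Vpt * (Stinvᵀ - (1 / 2 : ℝ) • (Stinvᵀ * Mtᵀ * Stinvᵀ))
    ZUt * ZVtᵀ = ZU * ZVᵀ := by
  intro Ut Vt St Stinv Mt Upt Vpt ZU ZV ZUt ZVt
  have h1 : ZUt = ZU * QV := by
    simp only [ZUt, ZU, Ut, St, Stinv, Mt, Upt]
    simp only [Matrix.mul_add, Matrix.add_mul, Matrix.mul_sub, Matrix.sub_mul,
      Matrix.mul_smul, Matrix.smul_mul, Matrix.mul_one, Matrix.one_mul,
      Matrix.mul_assoc]
    simp only [← Matrix.mul_assoc QU QUᵀ, hQU', Matrix.one_mul,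
      ← Matrix.mul_assoc QV QVᵀ, hQV', ← Matrix.mul_assoc QU, ← Matrix.mul_assoc QV]
  have h2 : ZVt = ZV * QV := by
    simp only [ZVt, ZV, Vt, Stinv, Mt, Vpt, Matrix.transpose_mul, Matrix.transpose_transpose]
    simp only [Matrix.mul_add, Matrix.add_mul, Matrix.mul_sub, Matrix.sub_mul,
      Matrix.mul_smul, Matrix.smul_mul, Matrix.mul_one, Matrix.one_mul,
      Matrix.mul_assoc]
    simp only [← Matrix.mul_assoc QU QUᵀ, hQU', Matrix.one_mul,
      ← Matrix.mul_assoc QV QVᵀ, hQV', ← Matrix.mul_assoc QU, ← Matrix.mul_assoc QV]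
  rw [h1, h2, Matrix.transpose_mul, Matrix.mul_assoc, ← Matrix.mul_assoc QV, hQV',
    Matrix.one_mul]
end
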